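/- (Lemma.) For all integers k, n ≥ 0 and all scalars x, y, z ∈ 𝕜: P_{k,n}(x, z) = Σ_{a=0}^{n} Ш_{n−a,a}^{↑k} · β_{k,a} · P_{0,a}(y, z) · P_{k,n−a}(x, y)^{↑a} in 𝕜B_∞. -/

import Mathlib

namespace BraidPaper

/-- Relations of the infinite Artin braid group `B_∞`.  The generator with index `n : ℕ`
represents the Artin generator `σ_{n+1}` (so generators are `σ_1, σ_2, …`). -/
def BraidRels : Set (FreeGroup ℕ) :=
  {r | (∃ i : ℕ, r = .of i * .of (i + 1) * .of i * (.of (i + 1) * .of i * .of (i + 1))⁻¹) ∨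
       (∃ i j : ℕ, i + 2 ≤ j ∧ r = .of i * .of j * (.of j * .of i)⁻¹)}

/-- The infinite Artin braid group `B_∞`, presented by generators `σ_1, σ_2, …` and the
braid and far-commutativity relations. -/
abbrev BInf : Type := PresentedGroup BraidRels

/-- The Artin generator `σ i` of `B_∞` (meaningful for `i ≥ 1`). -/
def σ (i : ℕ) : BInf := PresentedGroup.of (i - 1)

lemma rel_eq_one {r : FreeGroup ℕ} (hr : r ∈ BraidRels) : PresentedGroup.mk BraidRels r = 1 := by
  have : r ∈ Subgroup.normalClosure BraidRels := Subgroup.subset_normalClosure hr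
  exact (QuotientGroup.eq_one_iff r).mpr this

lemma gen_braid (i : ℕ) :
    (PresentedGroup.of i : BInf) * .of (i + 1) * .of i = .of (i + 1) * .of i * .of (i + 1) := by
  have h := rel_eq_one (Or.inl ⟨i, rfl⟩)
  rw [map_mul, map_mul, map_mul, map_inv, map_mul, map_mul, mul_inv_eq_one] at h
  exact h

lemma gen_comm {i j : ℕ} (hij : i + 2 ≤ j) :
    (PresentedGroup.of i : BInf) * .of j = .of j * .of i := by
  have h := rel_eq_one (Or.inr ⟨i, j, hij, rfl⟩)
  rw [map_mul, map_mul, map_inv, map_mul, mul_inv_eq_one] at h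
  exact h

/-- The shift endomorphism `↑ℓ : B_∞ → B_∞`, `σ_i ↦ σ_{i+ℓ}`. -/
def shift (l : ℕ) : BInf →* BInf :=
  PresentedGroup.toGroup (f := fun n => (PresentedGroup.of (n + l) : BInf)) (by
    rintro r (⟨i, rfl⟩ | ⟨i, j, hij, rfl⟩) <;>
      simp only [map_mul, map_inv, FreeGroup.lift_apply_of, mul_inv_eq_one]
    · have h1 : i + 1 + l = i + l + 1 := by omega
      rw [h1]; exact gen_braid (i + l)
    · exact gen_comm (by omega : (i + l) + 2 ≤ j + l))

/-- The ascending product `σ_i σ_{i+1} ⋯ σ_{i+l-1}` (of `l` factors). -/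
def asc (i l : ℕ) : BInf := ((List.range l).map fun t => σ (i + t)).prod

/-- The descending product `σ_i σ_{i-1} ⋯ σ_{i-k+1}` (of `k` factors). -/
def desc (i k : ℕ) : BInf := ((List.range k).map fun t => σ (i - t)).prod

/-- The block transposition braid
`β_{k,l} = (σ_k σ_{k+1} ⋯ σ_{k+l-1})(σ_{k-1} σ_k ⋯ σ_{k+l-2}) ⋯ (σ_1 σ_2 ⋯ σ_l)`,
with `β_{k,0} = β_{0,l} = 1`. -/
def β (k l : ℕ) : BInf := ((List.range k).map fun r => asc (k - r) l).prod

/-- The positive (Garside) lift `ω_a = β_{1,1} β_{2,1} ⋯ β_{a-1,1}` of the longest element of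
the symmetric group `S_a`, with `ω_0 = ω_1 = 1`. -/
def ω (a : ℕ) : BInf := ((List.range (a - 1)).map fun t => β (t + 1) 1).prod

/-- The copy of the braid group `B_n` inside `B_∞`: the subgroup generated by
`σ_1, …, σ_{n-1}`. -/
def BSub (n : ℕ) : Subgroup BInf := Subgroup.closure {g | ∃ i, 1 ≤ i ∧ i < n ∧ g = σ i}


variable (𝕜 : Type) [CommRing 𝕜]

/-- The canonical embedding of `B_∞` into its group algebra `𝕜B_∞`. -/
noncomputable def ι (g : BInf) : MonoidAlgebra 𝕜 BInf := MonoidAlgebra.of 𝕜 BInf g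

/-- The shift `↑ℓ` extended (as an algebra homomorphism) to the group algebra `𝕜B_∞`. -/
noncomputable def shiftA (l : ℕ) : MonoidAlgebra 𝕜 BInf →ₐ[𝕜] MonoidAlgebra 𝕜 BInf :=
  MonoidAlgebra.mapDomainAlgHom 𝕜 𝕜 (shift l)

/-- The braid shuffle elements `Ш_{m,n} ∈ 𝕜B_∞` (for natural `m, n`), determined by
`Ш_{0,n} = Ш_{m,0} = 1` and the Pascal-type recursion
`Ш_{m,n} = Ш_{m-1,n} + Ш_{m,n-1} β_{m,1}^{↑(n-1)}`. -/
noncomputable def Sh : ℕ → ℕ → MonoidAlgebra 𝕜 BInf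
  | 0, _ => 1
  | _ + 1, 0 => 1
  | m + 1, n + 1 => Sh m (n + 1) + Sh (m + 1) n * ι 𝕜 (shift n (β (m + 1) 1))
  termination_by m n => (m, n)

/-- The braid shuffle elements `Ш_{m,n} ∈ 𝕜B_∞` for integer indices: `Ш_{m,n} = 0` whenever
`m < 0` or `n < 0`. -/
noncomputable def ShZ (m n : ℤ) : MonoidAlgebra 𝕜 BInf :=
  if 0 ≤ m ∧ 0 ≤ n then Sh 𝕜 m.toNat n.toNat else 0

/-- The braid Pochhammer symbol
`P_{k,n}(x,y) = (x - β_{k,1} y)(x - β_{k+1,1} y) ⋯ (x - β_{k+n-1,1} y) ∈ 𝕜B_∞`. -/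
noncomputable def Poch (k n : ℕ) (x y : 𝕜) : MonoidAlgebra 𝕜 BInf :=
  ((List.range n).map fun t =>
    algebraMap 𝕜 (MonoidAlgebra 𝕜 BInf) x - algebraMap 𝕜 (MonoidAlgebra 𝕜 BInf) y * ι 𝕜 (β (k + t) 1)).prod

/-! By induction on `n`, multiplying the decomposition for `n` on the right by the last factor
`x - z β_{k+n,1}`. In the summand indexed by `a` (with `m = n - a`), write
`β_{k+n,1} = β_{k+m,1}^{↑a} β_{a,1}`, so that the factor becomes
`(x - y β_{k+m,1}^{↑a}) + β_{k+m,1}^{↑a} (y - z β_{a,1})`. The first part lengthens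
`P_{k,m}(x,y)^{↑a}` by one factor. In the second, `β_{k+m,1}^{↑a}` moves left through
`P_{k,m}(x,y)^{↑a}`, raising its shift to `a + 1` (conjugation by `β_{l,1}` shifts `B_l` by one),
commutes with `P_{0,a}(y,z)`, and is absorbed by
`β_{k,a} β_{k+m,1}^{↑a} = β_{m,1}^{↑(k+a)} β_{k,a+1}`, while `y - z β_{a,1}` lengthens
`P_{0,a}(y,z)`. The two resulting sums recombine by the Pascal recursion of `Ш`. -/

lemma shift_of (l n : ℕ) : shift l (PresentedGroup.of n) = PresentedGroup.of (n + l) :=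
  PresentedGroup.toGroup.of _

lemma shift_σ (l : ℕ) {i : ℕ} (hi : 1 ≤ i) : shift l (σ i) = σ (i + l) := by
  rw [σ, σ, shift_of]
  congr 1
  omega

lemma shift_shift (l j : ℕ) (g : BInf) : shift l (shift j g) = shift (l + j) g := by
  have : (shift l).comp (shift j) = shift (l + j) :=
    PresentedGroup.ext fun n => by
      simp only [MonoidHom.comp_apply, shift_of, add_assoc, add_comm j l]
  exact DFunLike.congr_fun this g

lemma σ_braid (i : ℕ) : σ (i + 1) * σ (i + 2) * σ (i + 1) = σ (i + 2) * σ (i + 1) * σ (i + 2) :=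
  gen_braid i

lemma σ_commute {i j : ℕ} (hi : 1 ≤ i) (hij : i + 2 ≤ j) : Commute (σ i) (σ j) := by
  obtain ⟨i, rfl⟩ : ∃ i', i = i' + 1 := ⟨i - 1, by omega⟩
  obtain ⟨j, rfl⟩ : ∃ j', j = j' + 1 := ⟨j - 1, by omega⟩
  exact gen_comm (by omega)

lemma σ_commute_shift {i n : ℕ} (hi : 1 ≤ i) (hin : i < n) (g : BInf) :
    Commute (σ i) (shift n g) := by
  have hconj : (MulAut.conj (σ i)).toMonoidHom.comp (shift n) = shift n := by
    refine PresentedGroup.ext fun j => ?_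
    have hc : Commute (σ i) (σ (j + 1 + n)) := σ_commute hi (by omega)
    simp only [MonoidHom.comp_apply, MulEquiv.coe_toMonoidHom, MulAut.conj_apply, shift_of]
    rw [show (PresentedGroup.of (j + n) : BInf) = σ (j + 1 + n) by rw [σ]; congr 1; omega,
      hc.eq, mul_inv_cancel_right]
  have := DFunLike.congr_fun hconj g
  simp only [MonoidHom.comp_apply, MulEquiv.coe_toMonoidHom, MulAut.conj_apply] at this
  exact mul_inv_eq_iff_eq_mul.mp this

lemma σ_mem_BSub {i n : ℕ} (hi : 1 ≤ i) (hin : i < n) : σ i ∈ BSub n :=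
  Subgroup.subset_closure ⟨i, hi, hin, rfl⟩

lemma BSub_mono {m n : ℕ} (h : m ≤ n) : BSub m ≤ BSub n :=
  Subgroup.closure_mono fun _ ⟨i, hi, him, hg⟩ => ⟨i, hi, him.trans_le h, hg⟩

lemma commute_shift_of_mem_BSub {n : ℕ} {g : BInf} (hg : g ∈ BSub n) (h : BInf) :
    Commute g (shift n h) := by
  have : BSub n ≤ Subgroup.centralizer {shift n h} := by
    refine (Subgroup.closure_le _).mpr ?_
    rintro _ ⟨i, hi, hin, rfl⟩
    exact Subgroup.mem_centralizer_singleton_iff.mpr (σ_commute_shift hi hin h).eq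
  exact Subgroup.mem_centralizer_singleton_iff.mp (this hg)

lemma commute_σ_of_mem_BSub {n i : ℕ} {g : BInf} (hg : g ∈ BSub n) (hni : n < i) :
    Commute g (σ i) := by
  simpa [shift_σ n (by omega : 1 ≤ i - n), Nat.sub_add_cancel hni.le] using
    commute_shift_of_mem_BSub hg (σ (i - n))

lemma asc_succ (i l : ℕ) : asc i (l + 1) = asc i l * σ (i + l) := by
  simp [asc, List.range_succ]

lemma asc_mem_BSub {p : ℕ} (hp : 1 ≤ p) (l : ℕ) : asc p l ∈ BSub (p + l) :=
  Subgroup.list_prod_mem (K := BSub (p + l)) <| by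
    simpa using fun t ht => σ_mem_BSub (by omega) (by omega)

lemma β_mem_BSub (k a : ℕ) : β k a ∈ BSub (k + a) :=
  Subgroup.list_prod_mem (K := BSub (k + a)) <| by
    simpa using fun r hr => BSub_mono (by omega) (asc_mem_BSub (by omega : 1 ≤ k - r) a)

lemma β_zero_left (l : ℕ) : β 0 l = 1 := by simp [β]

lemma β_zero_right (k : ℕ) : β k 0 = 1 := by simp [β, asc]

lemma β_succ_left (k l : ℕ) : β (k + 1) l = asc (k + 1) l * β k l := by
  rw [β, List.range_succ_eq_map]
  simp only [List.map_cons, List.prod_cons, List.map_map, Nat.sub_zero]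
  congr 2
  exact List.map_congr_left fun r _ => by simp only [Function.comp_apply]; congr 1; omega

lemma β_succ_one (j : ℕ) : β (j + 1) 1 = σ (j + 1) * β j 1 := by
  simp [β_succ_left, asc]

lemma β_succ_right (k a : ℕ) : β k (a + 1) = β k a * shift a (β k 1) := by
  induction k with
  | zero => simp [β_zero_left]
  | succ k ih =>
    have hc : Commute (σ (k + 1 + a)) (β k a) :=
      (commute_σ_of_mem_BSub (β_mem_BSub k a) (by omega)).symm
    rw [β_succ_left, β_succ_left, ih, asc_succ, β_succ_one, map_mul, shift_σ a (by omega),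
      mul_assoc, ← mul_assoc (σ _), hc.eq]
    simp only [mul_assoc]

lemma β_add_one_eq_shift_mul (p q : ℕ) : β (p + q) 1 = shift q (β p 1) * β q 1 := by
  induction p with
  | zero => simp [β_zero_left]
  | succ p ih =>
    rw [Nat.add_right_comm, β_succ_one, ih, β_succ_one, map_mul, shift_σ q (by omega),
      Nat.add_right_comm, mul_assoc]

lemma σ_mul_β_one {i l : ℕ} (hi : 1 ≤ i) (hil : i < l) : σ i * β l 1 = β l 1 * σ (i + 1) := by
  obtain ⟨j, rfl⟩ : ∃ j, i = j + 1 := ⟨i - 1, by omega⟩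
  obtain ⟨r, rfl⟩ : ∃ r, l = r + (j + 2) := ⟨l - (j + 2), by omega⟩
  set S := shift (j + 2) (β r 1)
  have hS : Commute (σ (j + 1)) S := σ_commute_shift hi (by omega) _
  have hd : Commute (β j 1) (σ (j + 2)) := commute_σ_of_mem_BSub (β_mem_BSub j 1) (by omega)
  rw [β_add_one_eq_shift_mul, β_succ_one, β_succ_one]
  calc σ (j + 1) * (S * (σ (j + 1 + 1) * (σ (j + 1) * β j 1)))
      = S * (σ (j + 1) * σ (j + 2) * σ (j + 1)) * β j 1 := by
        rw [← mul_assoc, hS.eq]; simp only [mul_assoc]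
    _ = S * (σ (j + 2) * σ (j + 1)) * (σ (j + 2) * β j 1) := by
        rw [σ_braid]; simp only [mul_assoc]
    _ = S * (σ (j + 1 + 1) * (σ (j + 1) * β j 1)) * σ (j + 1 + 1) := by
        rw [← hd.eq]; simp only [mul_assoc]

lemma mul_β_one_of_mem_BSub {l : ℕ} {g : BInf} (hg : g ∈ BSub l) :
    g * β l 1 = β l 1 * shift 1 g := by
  induction hg using Subgroup.closure_induction with
  | mem g hg =>
    obtain ⟨i, hi, hil, rfl⟩ := hg
    rw [σ_mul_β_one hi hil, shift_σ 1 hi]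
  | one => simp
  | mul g h _ _ hg hh => rw [map_mul, mul_assoc, hh, ← mul_assoc, hg, mul_assoc]
  | inv g _ hg => rw [map_inv, eq_mul_inv_iff_mul_eq, mul_assoc, ← hg, inv_mul_cancel_left]

lemma β_mul_shift_β_one (k a m : ℕ) :
    β k a * shift a (β (k + m) 1) = shift (k + a) (β m 1) * β k (a + 1) := by
  have hc : Commute (β k a) (shift (k + a) (β m 1)) :=
    commute_shift_of_mem_BSub (β_mem_BSub k a) _
  rw [add_comm k m, β_add_one_eq_shift_mul, map_mul, shift_shift, add_comm a k, ← mul_assoc,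
    hc.eq, mul_assoc, ← β_succ_right]

lemma ι_mul (g h : BInf) : ι 𝕜 (g * h) = ι 𝕜 g * ι 𝕜 h := map_mul (MonoidAlgebra.of 𝕜 BInf) g h

lemma ι_one : ι 𝕜 1 = 1 := map_one (MonoidAlgebra.of 𝕜 BInf)

lemma semiconjBy_ι {g u v : BInf} (h : SemiconjBy g u v) : SemiconjBy (ι 𝕜 g) (ι 𝕜 u) (ι 𝕜 v) :=
  h.map (MonoidAlgebra.of 𝕜 BInf)

lemma shiftA_ι (l : ℕ) (g : BInf) : shiftA 𝕜 l (ι 𝕜 g) = ι 𝕜 (shift l g) := by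
  simp [shiftA, ι]

noncomputable def pochProd (x y : 𝕜) (u : ℕ → BInf) (m : ℕ) : MonoidAlgebra 𝕜 BInf :=
  ((List.range m).map fun t =>
    algebraMap 𝕜 (MonoidAlgebra 𝕜 BInf) x - algebraMap 𝕜 (MonoidAlgebra 𝕜 BInf) y * ι 𝕜 (u t)).prod

lemma pochProd_succ (x y : 𝕜) (u : ℕ → BInf) (m : ℕ) :
    pochProd 𝕜 x y u (m + 1) = pochProd 𝕜 x y u m *
      (algebraMap 𝕜 (MonoidAlgebra 𝕜 BInf) x -
        algebraMap 𝕜 (MonoidAlgebra 𝕜 BInf) y * ι 𝕜 (u m)) := by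
  simp [pochProd, List.range_succ]

lemma shiftA_pochProd (l : ℕ) (x y : 𝕜) (u : ℕ → BInf) (m : ℕ) :
    shiftA 𝕜 l (pochProd 𝕜 x y u m) = pochProd 𝕜 x y (fun t => shift l (u t)) m := by
  simp only [pochProd, map_list_prod, List.map_map]
  congr 1
  exact List.map_congr_left fun t _ => by
    simp only [Function.comp_apply, map_sub, map_mul, AlgHom.commutes, shiftA_ι]

lemma semiconjBy_pochProd {x y : 𝕜} {g : BInf} {u v : ℕ → BInf} {m : ℕ}
    (h : ∀ t < m, SemiconjBy g (v t) (u t)) :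
    SemiconjBy (ι 𝕜 g) (pochProd 𝕜 x y v m) (pochProd 𝕜 x y u m) := by
  induction m with
  | zero => exact SemiconjBy.one_right _
  | succ m ih =>
    rw [pochProd_succ, pochProd_succ]
    exact (ih fun t ht => h t (by omega)).mul_right <|
      SemiconjBy.sub_right (Algebra.commute_algebraMap_right x _) <|
        SemiconjBy.mul_right (Algebra.commute_algebraMap_right y _)
          (semiconjBy_ι 𝕜 (h m (by omega)))

lemma Poch_succ (k m : ℕ) (x y : 𝕜) :
    Poch 𝕜 k (m + 1) x y = Poch 𝕜 k m x y *
      (algebraMap 𝕜 (MonoidAlgebra 𝕜 BInf) x -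
        algebraMap 𝕜 (MonoidAlgebra 𝕜 BInf) y * ι 𝕜 (β (k + m) 1)) :=
  pochProd_succ 𝕜 x y _ m

lemma shiftA_Poch (l k m : ℕ) (x y : 𝕜) :
    shiftA 𝕜 l (Poch 𝕜 k m x y) = pochProd 𝕜 x y (fun t => shift l (β (k + t) 1)) m :=
  shiftA_pochProd 𝕜 l x y _ m

lemma Sh_zero_left (n : ℕ) : Sh 𝕜 0 n = 1 := by rw [Sh]

lemma Sh_zero_right (m : ℕ) : Sh 𝕜 m 0 = 1 := by
  cases m <;> rw [Sh]

lemma Sh_succ_succ (m n : ℕ) :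
    Sh 𝕜 (m + 1) (n + 1) = Sh 𝕜 m (n + 1) + Sh 𝕜 (m + 1) n * ι 𝕜 (shift n (β (m + 1) 1)) := by
  rw [Sh]

noncomputable def decompTerm (k : ℕ) (x y z : 𝕜) (a m : ℕ) : MonoidAlgebra 𝕜 BInf :=
  ι 𝕜 (β k a) * Poch 𝕜 0 a y z * shiftA 𝕜 a (Poch 𝕜 k m x y)

theorem decompTerm_mul (k a m : ℕ) (x y z : 𝕜) :
    decompTerm 𝕜 k x y z a m *
        (algebraMap 𝕜 (MonoidAlgebra 𝕜 BInf) x -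
          algebraMap 𝕜 (MonoidAlgebra 𝕜 BInf) z * ι 𝕜 (β (k + m + a) 1)) =
      decompTerm 𝕜 k x y z a (m + 1) +
        ι 𝕜 (shift (k + a) (β m 1)) * decompTerm 𝕜 k x y z (a + 1) m := by
  set C := algebraMap 𝕜 (MonoidAlgebra 𝕜 BInf)
  set D := shift a (β (k + m) 1)
  set F := C y - C z * ι 𝕜 (β a 1)
  have hsplit : C x - C z * ι 𝕜 (β (k + m + a) 1) = (C x - C y * ι 𝕜 D) + ι 𝕜 D * F := by
    have hy : C y * ι 𝕜 D = ι 𝕜 D * C y := Algebra.commutes y _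
    have hz : C z * ι 𝕜 D = ι 𝕜 D * C z := Algebra.commutes z _
    rw [β_add_one_eq_shift_mul, ι_mul, mul_sub, ← mul_assoc (ι 𝕜 D), ← hy, ← hz, mul_assoc]
    abel
  have hswap : shiftA 𝕜 a (Poch 𝕜 k m x y) * ι 𝕜 D = ι 𝕜 D * shiftA 𝕜 (a + 1) (Poch 𝕜 k m x y) := by
    rw [shiftA_Poch, shiftA_Poch]
    refine (semiconjBy_pochProd 𝕜 fun t ht => ?_).eq.symm
    have := congrArg (shift a)
      (mul_β_one_of_mem_BSub (BSub_mono (by omega) (β_mem_BSub (k + t) 1)) :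
        β (k + t) 1 * β (k + m) 1 = _)
    rw [map_mul, map_mul, shift_shift] at this
    exact this.symm
  have hF : Commute F (shiftA 𝕜 (a + 1) (Poch 𝕜 k m x y)) := by
    rw [shiftA_Poch]
    have : Commute (ι 𝕜 (β a 1)) _ := semiconjBy_pochProd 𝕜 (x := x) (y := y) (m := m)
      fun t _ => commute_shift_of_mem_BSub (β_mem_BSub a 1) (β (k + t) 1)
    exact (Algebra.commute_algebraMap_left y _).sub_left
      ((Algebra.commute_algebraMap_left z _).mul_left this)
  have hP : Commute (ι 𝕜 D) (Poch 𝕜 0 a y z) := semiconjBy_pochProd 𝕜 fun t ht =>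
    (commute_shift_of_mem_BSub (BSub_mono (by omega) (β_mem_BSub (0 + t) 1)) _).symm
  rw [hsplit, mul_add]
  congr 1
  · rw [decompTerm, decompTerm, Poch_succ, map_mul, map_sub, map_mul, AlgHom.commutes,
      AlgHom.commutes, shiftA_ι, mul_assoc]
  · calc decompTerm 𝕜 k x y z a m * (ι 𝕜 D * F)
        = ι 𝕜 (β k a) * Poch 𝕜 0 a y z * (shiftA 𝕜 a (Poch 𝕜 k m x y) * ι 𝕜 D) * F := by
          simp only [decompTerm, mul_assoc]
      _ = ι 𝕜 (β k a) * (Poch 𝕜 0 a y z * ι 𝕜 D) * (shiftA 𝕜 (a + 1) (Poch 𝕜 k m x y) * F) := by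
          rw [hswap]; simp only [mul_assoc]
      _ = ι 𝕜 (β k a) * ι 𝕜 D * (Poch 𝕜 0 a y z * F) * shiftA 𝕜 (a + 1) (Poch 𝕜 k m x y) := by
          rw [← hP.eq, ← hF.eq]; simp only [mul_assoc]
      _ = ι 𝕜 (shift (k + a) (β m 1)) * decompTerm 𝕜 k x y z (a + 1) m := by
          have hPF : Poch 𝕜 0 a y z * F = Poch 𝕜 0 (a + 1) y z := by rw [Poch_succ, zero_add]
          rw [← ι_mul, β_mul_shift_β_one, ι_mul, hPF, decompTerm]
          simp only [mul_assoc]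

open Finset Nat in
theorem _root_.Finset.Nat.sum_antidiagonal_succ_of_pascal {M : Type*} [AddCommMonoid M]
    {h f g : ℕ → ℕ → M} (hij : ∀ i j, h (i + 1) (j + 1) = f (i + 1) j + g i (j + 1))
    (hi : ∀ j, h 0 (j + 1) = f 0 j) (hj : ∀ i, h (i + 1) 0 = g i 0) (n : ℕ) :
    ∑ p ∈ antidiagonal (n + 1), h p.1 p.2 = ∑ p ∈ antidiagonal n, (f p.1 p.2 + g p.1 p.2) := by
  rw [sum_antidiagonal_succ, hi, sum_add_distrib]
  cases n with
  | zero => simp [hj]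
  | succ n =>
    rw [sum_antidiagonal_succ', hj, sum_antidiagonal_succ (f := fun p => f p.1 p.2),
      sum_antidiagonal_succ' (f := fun p => g p.1 p.2)]
    simp only [hij, sum_add_distrib]
    abel

open Finset in
theorem Poch_eq_sum_antidiagonal (k n : ℕ) (x y z : 𝕜) :
    Poch 𝕜 k n x z =
      ∑ p ∈ antidiagonal n, shiftA 𝕜 k (Sh 𝕜 p.2 p.1) * decompTerm 𝕜 k x y z p.1 p.2 := by
  induction n with
  | zero => simp [decompTerm, Poch, Sh_zero_left, β_zero_right, ι_one]
  | succ n ih =>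
    rw [Nat.sum_antidiagonal_succ_of_pascal
      (h := fun a m => shiftA 𝕜 k (Sh 𝕜 m a) * decompTerm 𝕜 k x y z a m)
      (f := fun a m => shiftA 𝕜 k (Sh 𝕜 m a) * decompTerm 𝕜 k x y z a (m + 1))
      (g := fun a m => shiftA 𝕜 k (Sh 𝕜 m a) * ι 𝕜 (shift (k + a) (β m 1)) *
        decompTerm 𝕜 k x y z (a + 1) m)]
    · rw [Poch_succ, ih, sum_mul]
      refine sum_congr rfl fun p hp => ?_
      rw [show k + n = k + p.2 + p.1 by rw [← mem_antidiagonal.mp hp]; ring, mul_assoc,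
        decompTerm_mul, mul_add, mul_assoc]
    · intro a m
      rw [Sh_succ_succ, map_add, add_mul, map_mul, shiftA_ι, shift_shift, mul_assoc]
    · intro m
      simp only [Sh_zero_right]
    · intro a
      simp [Sh_zero_left, β_zero_left, ι_one]

/-- Lemma: for all `k, n ≥ 0` and scalars `x, y, z`,
`P_{k,n}(x,z) = Σ_{a=0}^{n} Ш_{n-a,a}^{↑k} β_{k,a} P_{0,a}(y,z) P_{k,n-a}(x,y)^{↑a}`. -/
theorem pochhammer_decomposition (k n : ℕ) (x y z : 𝕜) :
    Poch 𝕜 k n x z =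
      ∑ a ∈ Finset.range (n + 1),
        shiftA 𝕜 k (Sh 𝕜 (n - a) a) * ι 𝕜 (β k a) * Poch 𝕜 0 a y z *
          shiftA 𝕜 a (Poch 𝕜 k (n - a) x y) := by
  rw [Poch_eq_sum_antidiagonal 𝕜 k n x y z, Finset.Nat.sum_antidiagonal_eq_sum_range_succ_mk]
  simp only [decompTerm, mul_assoc]

end BraidPaper
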